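/- Let (X, S) be a C-space with interior relation ρ (x ρ y iff y ∈ int ↑x). For a subset B of X, the following are equivalent: (1) B is ρ-dense (x ρ y implies x ρ b and b ρ y for some b ∈ B); (2) B is a core basis (for every open U and y ∈ U there is b ∈ B ∩ U with y ∈ int ↑b); (3) B is dense in the Skula topology generated by the open sets together with the closed sets of S. -/

import Mathlib

/-!
The sets `U ∩ C` with `U` open and `C` closed form a basis of the Skula topology, and cores are the
sets `↑x = {y | y ⤳ x}`, so `y ∈ ↑b` iff `b ∈ closure {y}`. A core basis is Skula-dense because a
point of `↑b` drags `b` into every closed set containing it. Conversely, in a C-space an open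
`U ∋ y` contains a core `↑u` with `y ∈ int ↑u`, and inside `int ↑u` a core `↑u'` with
`y ∈ int ↑u'`; a point `b ∈ B` of the Skula-open set `int ↑u ∩ closure {u'}` lies in `U` and
satisfies `↑u' ⊆ ↑b`.
-/

variable {X : Type*} [TopologicalSpace X]

/-- The specialization preorder: x ≤ y iff every open set containing x contains y. -/
def sle (x y : X) : Prop := ∀ U : Set X, IsOpen U → x ∈ U → y ∈ U

/-- The core of a point. -/
def core (x : X) : Set X := {y | sle x y}

/-- The interior relation: x ρ y iff y ∈ int(↑x). -/
def rho (x y : X) : Prop := y ∈ interior (core x)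

/-- The Skula (strong patch) topology: generated by the open sets together
with the closed sets. -/
def skula (X : Type*) [TopologicalSpace X] : TopologicalSpace X :=
  TopologicalSpace.generateFrom {U : Set X | IsOpen U ∨ IsClosed U}

open Set Topology TopologicalSpace

def IsCSpace (X : Type*) [TopologicalSpace X] : Prop :=
  ∀ (x : X) (U : Set X), IsOpen U → x ∈ U → ∃ u : X, x ∈ interior (core u) ∧ core u ⊆ U

def IsRhoDense (B : Set X) : Prop :=
  ∀ x y : X, rho x y → ∃ b ∈ B, rho x b ∧ rho b y

def IsCoreBasis (B : Set X) : Prop :=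
  ∀ (U : Set X) (y : X), IsOpen U → y ∈ U → ∃ b ∈ B, b ∈ U ∧ y ∈ interior (core b)

section Core

variable {x y : X}

theorem mem_core_iff_specializes : y ∈ core x ↔ y ⤳ x :=
  specializes_iff_forall_open.symm

theorem mem_core_iff_mem_closure : y ∈ core x ↔ x ∈ closure {y} :=
  mem_core_iff_specializes.trans specializes_iff_mem_closure

theorem mem_core_self (x : X) : x ∈ core x :=
  mem_core_iff_specializes.2 specializes_rfl

theorem core_subset_core (h : y ∈ core x) : core y ⊆ core x :=
  fun _ hz => mem_core_iff_specializes.2 <|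
    (mem_core_iff_specializes.1 hz).trans (mem_core_iff_specializes.1 h)

theorem mem_of_mem_core_of_isClosed {C : Set X} (hC : IsClosed C) (hy : y ∈ core x) (hyC : y ∈ C) :
    x ∈ C :=
  (mem_core_iff_specializes.1 hy).mem_closed hC hyC

end Core

theorem isTopologicalBasis_skula :
    @IsTopologicalBasis X (skula X) (image2 (· ∩ ·) {U | IsOpen U} {C | IsClosed C}) := by
  refine @IsTopologicalBasis.mk X (skula X) _ ?_ ?_ (le_antisymm ?_ ?_)
  · rintro _ ⟨U₁, hU₁, C₁, hC₁, rfl⟩ _ ⟨U₂, hU₂, C₂, hC₂, rfl⟩ x hx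
    exact ⟨(U₁ ∩ U₂) ∩ (C₁ ∩ C₂), mem_image2_of_mem (hU₁.inter hU₂) (hC₁.inter hC₂),
      by rwa [inter_inter_inter_comm], by rw [inter_inter_inter_comm]⟩
  · exact sUnion_eq_univ_iff.2 fun x =>
      ⟨univ ∩ univ, mem_image2_of_mem isOpen_univ isClosed_univ, trivial, trivial⟩
  · rw [le_generateFrom_iff_subset_isOpen]
    rintro _ ⟨U, hU, C, hC, rfl⟩
    exact GenerateOpen.inter _ _ (.basic U (Or.inl hU)) (.basic C (Or.inr hC))
  · rw [skula, le_generateFrom_iff_subset_isOpen]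
    rintro S (hS | hS)
    · exact isOpen_generateFrom_of_mem ⟨S, hS, univ, isClosed_univ, inter_univ S⟩
    · exact isOpen_generateFrom_of_mem ⟨univ, isOpen_univ, S, hS, univ_inter S⟩

theorem dense_skula_iff {B : Set X} :
    @Dense X (skula X) B ↔
      ∀ U, IsOpen U → ∀ C, IsClosed C → (U ∩ C).Nonempty → (U ∩ C ∩ B).Nonempty :=
  (@IsTopologicalBasis.dense_iff X (skula X) _ isTopologicalBasis_skula B).trans forall_mem_image2

theorem IsRhoDense.isCoreBasis (hX : IsCSpace X) {B : Set X} (hB : IsRhoDense B) :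
    IsCoreBasis B := by
  intro U y hU hy
  obtain ⟨u, hyu, huU⟩ := hX y U hU hy
  obtain ⟨b, hb, hub, hby⟩ := hB u y hyu
  exact ⟨b, hb, huU (interior_subset hub), hby⟩

theorem IsCoreBasis.isRhoDense {B : Set X} (hB : IsCoreBasis B) : IsRhoDense B :=
  fun x y hxy => hB (interior (core x)) y isOpen_interior hxy

theorem IsCoreBasis.dense_skula {B : Set X} (hB : IsCoreBasis B) : @Dense X (skula X) B := by
  rw [dense_skula_iff]
  rintro U hU C hC ⟨y, hyU, hyC⟩
  obtain ⟨b, hb, hbU, hyb⟩ := hB U y hU hyU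
  exact ⟨b, ⟨hbU, mem_of_mem_core_of_isClosed hC (interior_subset hyb) hyC⟩, hb⟩

theorem isCoreBasis_of_dense_skula (hX : IsCSpace X) {B : Set X} (hB : @Dense X (skula X) B) :
    IsCoreBasis B := by
  intro U y hU hy
  obtain ⟨u, hyu, huU⟩ := hX y U hU hy
  obtain ⟨u', hyu', hu'u⟩ := hX y _ isOpen_interior hyu
  have hu' : u' ∈ interior (core u) ∩ closure {u'} :=
    ⟨hu'u (mem_core_self u'), subset_closure rfl⟩
  obtain ⟨b, ⟨hbu, hbu'⟩, hb⟩ := dense_skula_iff.1 hB _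
    isOpen_interior _ isClosed_closure ⟨u', hu'⟩
  have hu'b : core u' ⊆ core b := core_subset_core (mem_core_iff_mem_closure.2 hbu')
  exact ⟨b, hb, huU (interior_subset hbu), interior_mono hu'b hyu'⟩

/-- In a C-space, for B ⊆ X the following are equivalent:
ρ-density of B, B being a core basis, and density of B in the Skula topology. -/
theorem stmt_19
    (hC : ∀ (x : X) (U : Set X), IsOpen U → x ∈ U →
      ∃ u : X, x ∈ interior (core u) ∧ core u ⊆ U)
    (B : Set X) :
    ((∀ x y : X, rho x y → ∃ b ∈ B, rho x b ∧ rho b y) ↔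
      (∀ (U : Set X) (y : X), IsOpen U → y ∈ U →
        ∃ b ∈ B, b ∈ U ∧ y ∈ interior (core b))) ∧
    ((∀ (U : Set X) (y : X), IsOpen U → y ∈ U →
        ∃ b ∈ B, b ∈ U ∧ y ∈ interior (core b)) ↔
      @Dense X (skula X) B) :=
  ⟨⟨IsRhoDense.isCoreBasis hC, IsCoreBasis.isRhoDense⟩,
    ⟨IsCoreBasis.dense_skula, isCoreBasis_of_dense_skula hC⟩⟩
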